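/- arXiv:1410.6118 — 3 statements merged into one kernel-verified Lean document; each statement's English description precedes it below -/
import Mathlib

section
/- Consider a game with a finite set P of players, each having action set Q = {1, 2}, and utility functions u : States × P × Q → [0,1] where a state is a function S : P → Q. Suppose the utilities satisfy the VIC monotonicity properties: whenever states S₁ and S₂ differ only in the choice of one player p with S₁(p) = 1 and S₂(p) = 2, then for every player q, u(S₁, q, 1) ≥ u(S₂, q, 1) and u(S₁, q, 2) ≤ u(S₂, q, 2). Then there exists a state S* that is a pure Nash equilibrium in the following sense: for every player q, u(S*, q, S*(q)) ≥ u(S*, q, a) for each action a ∈ {1,2}. -/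
/-- In a game with finitely many players, two actions `0` ("1") and `1` ("2"),
and utilities satisfying the VIC monotonicity properties (switching one player
from action `0` to action `1` weakly decreases everyone's utility for action
`0` and weakly increases everyone's utility for action `1`), a pure Nash
(strong-equilibrium) state exists: some state in which every player's chosen
action maximizes her utility. -/
theorem stmt_3 (P : Type*) [Fintype P] [DecidableEq P]
    (u : (P → Fin 2) → P → Fin 2 → unitInterval)
    (hVIC : ∀ (S₁ S₂ : P → Fin 2) (p : P),
      (∀ q, q ≠ p → S₁ q = S₂ q) → S₁ p = 0 → S₂ p = 1 →
      ∀ q : P, u S₂ q 0 ≤ u S₁ q 0 ∧ u S₁ q 1 ≤ u S₂ q 1) :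
    ∃ S : P → Fin 2, ∀ (q : P) (a : Fin 2), u S q a ≤ u S q (S q) := by
  classical
  -- consistent states: every player playing 1 weakly prefers 1
  set C : Finset (P → Fin 2) :=
    Finset.univ.filter (fun S => ∀ p, S p = 1 → u S p 0 ≤ u S p 1) with hC
  have hzero : (fun _ : P => (0 : Fin 2)) ∈ C := by
    simp only [hC, Finset.mem_filter, Finset.mem_univ, true_and]
    intro p hp; exact absurd hp (by decide)
  obtain ⟨S, hS, hmax⟩ := C.exists_max_image
    (fun S => (Finset.univ.filter (fun p => S p = 1)).card) ⟨_, hzero⟩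
  simp only [hC, Finset.mem_filter, Finset.mem_univ, true_and] at hS
  refine ⟨S, fun q a => ?_⟩
  -- suffices to handle the action the player did not choose
  have h2 : S q = 0 ∨ S q = 1 := by
    rcases Fin.exists_fin_two.mp ⟨S q, rfl⟩ with h | h
    exacts [Or.inl h, Or.inr h]
  have ha2 : a = 0 ∨ a = 1 := by
    rcases Fin.exists_fin_two.mp ⟨a, rfl⟩ with h | h
    exacts [Or.inl h, Or.inr h]
  rcases h2 with h1 | h1
  · -- S q = 0 : show u S q 1 ≤ u S q 0 by maximality
    have key : u S q 1 ≤ u S q 0 := by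
      by_contra hlt
      push_neg at hlt
      set S' := Function.update S q 1 with hS'
      have hdiff : ∀ r, r ≠ q → S r = S' r := fun r hr => by
        simp [hS', Function.update_of_ne hr]
      have hSq : S q = 0 := h1
      have hS'q : S' q = 1 := by simp [hS']
      have hvic := hVIC S S' q hdiff hSq hS'q
      have hS'C : S' ∈ C := by
        simp only [hC, Finset.mem_filter, Finset.mem_univ, true_and]
        intro p hp
        by_cases hpq : p = q
        · subst hpq
          exact le_trans (hvic p).1 (le_trans hlt.le (hvic p).2)
        · have hSp : S p = 1 := by rw [hdiff p hpq]; exact hp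
          exact le_trans (hvic p).1 (le_trans (hS p hSp) (hvic p).2)
      have hcard : (Finset.univ.filter (fun p => S p = 1)).card <
          (Finset.univ.filter (fun p => S' p = 1)).card := by
        apply Finset.card_lt_card
        constructor
        · intro r hr
          simp only [Finset.mem_filter, Finset.mem_univ, true_and] at hr ⊢
          by_cases hrq : r = q
          · subst hrq; rw [hSq] at hr; exact absurd hr (by decide)
          · rw [← hdiff r hrq]; exact hr
        · intro hsub
          have := hsub (by simp [hS'q] : q ∈ Finset.univ.filter (fun p => S' p = 1))
          simp only [Finset.mem_filter, Finset.mem_univ, true_and] at this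
          rw [hSq] at this; exact absurd this (by decide)
      exact absurd (hmax S' hS'C) (not_le.mpr hcard)
    rcases ha2 with ha | ha
    · rw [ha, h1]
    · rw [ha, h1]; exact key
  · have key := hS q h1
    rcases ha2 with ha | ha
    · rw [ha, h1]; exact key
    · rw [ha, h1]
end

section
/- Under the same VIC monotonicity hypotheses (finite player set P, actions Q = {1,2}, and whenever S₂ differs from S₁ only by one player switching from action 1 to action 2, every player's utility for action 1 does not increase and utility for action 2 does not decrease), the following best-response dynamics terminates in at most |P| rounds: start with the state S₀ assigning action 1 to all players; at each step, simultaneously switch to action 2 every player p with u(S, p, 1) < u(S, p, 2); the resulting sequence of states is monotone (the set of players choosing action 2 is non-decreasing) and its limit is a strong-equilibrium state, i.e., a state in which every player's chosen action maximizes its utility. -/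
lemma fin2_cases (x : Fin 2) : x = 0 ∨ x = 1 := by omega

section aux
variable {P : Type*} [Fintype P] [DecidableEq P]
    (u : (P → Fin 2) → P → Fin 2 → unitInterval)
    (hVIC : ∀ (S₁ S₂ : P → Fin 2) (p : P),
      (∀ q, q ≠ p → S₁ q = S₂ q) → S₁ p = 0 → S₂ p = 1 →
      ∀ q : P, u S₂ q 0 ≤ u S₁ q 0 ∧ u S₁ q 1 ≤ u S₂ q 1)

include hVIC in
lemma vic_mono : ∀ n (S₁ S₂ : P → Fin 2),
    (Finset.univ.filter (fun p => S₁ p ≠ S₂ p)).card = n →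
    (∀ p, S₁ p = 1 → S₂ p = 1) →
    ∀ q, u S₂ q 0 ≤ u S₁ q 0 ∧ u S₁ q 1 ≤ u S₂ q 1 := by
  intro n
  induction n with
  | zero =>
    intro S₁ S₂ hcard _ q
    have : S₁ = S₂ := by
      funext p
      by_contra h
      have : p ∈ Finset.univ.filter (fun p => S₁ p ≠ S₂ p) := by simp [h]
      simp [Finset.card_eq_zero.mp hcard] at this
    subst this; exact ⟨le_refl _, le_refl _⟩
  | succ n ih =>
    intro S₁ S₂ hcard hle q
    have hne : (Finset.univ.filter (fun p => S₁ p ≠ S₂ p)).Nonempty := by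
      rw [← Finset.card_pos, hcard]; omega
    obtain ⟨p, hp⟩ := hne
    simp only [Finset.mem_filter] at hp
    have hS₁p : S₁ p = 0 := by
      rcases fin2_cases (S₁ p) with h | h
      · exact h
      · exact (hp.2 (h.trans (hle p h).symm)).elim
    have hS₂p : S₂ p = 1 := by
      rcases fin2_cases (S₂ p) with h | h
      · exact (hp.2 (hS₁p.trans h.symm)).elim
      · exact h
    set S' := Function.update S₁ p 1 with hS'
    have hstep := hVIC S₁ S' p (fun q hq => (Function.update_of_ne hq _ _).symm)
      hS₁p (Function.update_self _ _ _) q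
    have hcard' : (Finset.univ.filter (fun r => S' r ≠ S₂ r)).card = n := by
      have : Finset.univ.filter (fun r => S' r ≠ S₂ r)
          = (Finset.univ.filter (fun r => S₁ r ≠ S₂ r)).erase p := by
        ext r
        simp only [Finset.mem_filter, Finset.mem_erase, Finset.mem_univ, true_and]
        constructor
        · intro h
          have hrp : r ≠ p := by
            intro he; subst he
            exact h (by simp [hS', hS₂p])
          exact ⟨hrp, by rwa [hS', Function.update_of_ne hrp] at h⟩
        · intro ⟨hrp, h⟩
          rwa [hS', Function.update_of_ne hrp]
      rw [this, Finset.card_erase_of_mem (Finset.mem_filter.mpr ⟨Finset.mem_univ p, hp.2⟩), hcard]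
      omega
    have hle' : ∀ r, S' r = 1 → S₂ r = 1 := by
      intro r hr
      by_cases hrp : r = p
      · subst hrp; exact hS₂p
      · rw [hS', Function.update_of_ne hrp] at hr; exact hle r hr
    have := ih S' S₂ hcard' hle' q
    exact ⟨this.1.trans hstep.1, hstep.2.trans this.2⟩
end aux

/-- Best-response dynamics in the VIC monotone two-action game: starting from
the all-`0` ("all action 1") state and simultaneously switching to action `1`
("action 2") every player who strictly prefers it, the sequence of states is
monotone (the set of players choosing action `1` is non-decreasing), it
stabilizes after at most `|P|` rounds, and the resulting state is a
strong-equilibrium state. -/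
theorem stmt_4 (P : Type*) [Fintype P] [DecidableEq P]
    (u : (P → Fin 2) → P → Fin 2 → unitInterval)
    (hVIC : ∀ (S₁ S₂ : P → Fin 2) (p : P),
      (∀ q, q ≠ p → S₁ q = S₂ q) → S₁ p = 0 → S₂ p = 1 →
      ∀ q : P, u S₂ q 0 ≤ u S₁ q 0 ∧ u S₁ q 1 ≤ u S₂ q 1)
    (seq : ℕ → (P → Fin 2))
    (hseq0 : seq 0 = fun _ => 0)
    (hseqS : ∀ (k : ℕ) (p : P),
      seq (k + 1) p = if seq k p = 1 ∨ u (seq k) p 1 > u (seq k) p 0 then 1 else 0) :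
    (∀ (k : ℕ) (p : P), seq k p = 1 → seq (k + 1) p = 1) ∧
    seq (Fintype.card P + 1) = seq (Fintype.card P) ∧
    (∀ (q : P) (a : Fin 2),
      u (seq (Fintype.card P)) q a ≤ u (seq (Fintype.card P)) q (seq (Fintype.card P) q)) := by
  -- monotonicity
  have hmono : ∀ (k : ℕ) (p : P), seq k p = 1 → seq (k + 1) p = 1 := by
    intro k p h
    rw [hseqS]; simp [h]
  have hmono' : ∀ k l, k ≤ l → ∀ p, seq k p = 1 → seq l p = 1 := by
    intro k l hkl
    induction l with
    | zero =>
      intro p h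
      have : k = 0 := by omega
      subst this; exact h
    | succ l ih =>
      intro p h
      rcases Nat.lt_or_ge k (l+1) with hl | hl
      · exact hmono l p (ih (by omega) p h)
      · have : k = l + 1 := by omega
        subst this; exact h
  -- determinism: once fixed, stays fixed
  have hdet : ∀ k, seq (k+1) = seq k → ∀ l, k ≤ l → seq l = seq k := by
    intro k hfix l hkl
    induction l with
    | zero => have : k = 0 := by omega
              subst this; rfl
    | succ l ih =>
      rcases Nat.lt_or_ge k (l+1) with hl | hl
      · have hl' : seq l = seq k := ih (by omega)
        funext p
        rw [hseqS, hl']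
        conv_rhs => rw [← hfix]
        rw [hseqS]
      · have : k = l + 1 := by omega
        subst this; rfl
  -- the set of 1-players grows strictly until fixed
  set f : ℕ → ℕ := fun k => (Finset.univ.filter (fun p => seq k p = 1)).card with hf
  have hstrict : ∀ k, seq (k+1) ≠ seq k → f k < f (k+1) := by
    intro k hne
    apply Finset.card_lt_card
    constructor
    · intro p hp
      simp only [Finset.mem_filter, Finset.mem_univ, true_and] at hp ⊢
      exact hmono k p hp
    · intro hsub
      apply hne
      funext p
      rcases fin2_cases (seq (k+1) p) with h | h
      · rw [h]
        rcases fin2_cases (seq k p) with h' | h'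
        · rw [h']
        · exact absurd (hmono k p h') (by rw [h]; exact fun hc => by simp at hc)
      · rw [h]
        have : p ∈ Finset.univ.filter (fun p => seq k p = 1) :=
          hsub (by simp [h])
        simp only [Finset.mem_filter, Finset.mem_univ, true_and] at this
        rw [this]
  have hfbound : ∀ k, f k ≤ Fintype.card P := by
    intro k; exact Finset.card_filter_le _ _
  -- there is a fixed point within card P steps
  have hfix : ∃ k ≤ Fintype.card P, seq (k+1) = seq k := by
    by_contra h
    push_neg at h
    have hgrow : ∀ k, k ≤ Fintype.card P + 1 → k ≤ f k := by
      intro k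
      induction k with
      | zero => intro _; omega
      | succ k ih =>
        intro hk
        have h1 := hstrict k (h k (by omega))
        have := ih (by omega)
        omega
    have := hgrow (Fintype.card P + 1) (le_refl _)
    have := hfbound (Fintype.card P + 1)
    omega
  obtain ⟨k, hk, hkfix⟩ := hfix
  set N := Fintype.card P with hN
  have hNfix : seq N = seq k := hdet k hkfix N hk
  have hN1fix : seq (N+1) = seq k := hdet k hkfix (N+1) (by omega)
  have hstab : seq (N + 1) = seq N := by rw [hNfix, hN1fix]
  refine ⟨hmono, hstab, ?_⟩
  -- equilibrium
  intro q a
  rcases fin2_cases (seq N q) with hq | hq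
  · -- q plays 0 at fixed point: not strictly preferring 1
    have : seq (N+1) q = seq N q := by rw [hstab]
    rw [hseqS] at this
    rw [hq] at this
    by_cases hc : u (seq N) q 1 > u (seq N) q 0
    · simp [hc] at this
    · rcases fin2_cases a with ha | ha <;> subst ha
      · rw [hq]
      · rw [hq]; exact le_of_not_gt hc
  · -- q plays 1: find the step where it switched
    rcases fin2_cases a with ha | ha <;> subst ha
    swap
    · rw [hq]
    rw [hq]
    -- find minimal m with seq m q = 1
    have h0 : seq 0 q = 0 := by rw [hseq0]
    have hex : ∃ m, seq (m+1) q = 1 ∧ seq m q = 0 := by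
      by_contra hc
      push_neg at hc
      have hall : ∀ m, seq m q = 0 := by
        intro m
        induction m with
        | zero => exact h0
        | succ m ih =>
          rcases fin2_cases (seq (m+1) q) with h | h
          · exact h
          · exact absurd ih (hc m h)
      have := hall N
      rw [hq] at this; simp at this
    obtain ⟨m, hm1, hm0⟩ := hex
    have hmN : m ≤ N := by
      by_contra hc
      push_neg at hc
      have := hmono' N m (by omega) q hq
      rw [hm0] at this; simp at this
    have hpref : u (seq m) q 1 > u (seq m) q 0 := by
      have := hseqS m q
      rw [hm1, hm0] at this
      by_contra hc
      simp [hc] at this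
    have hle : ∀ p, seq m p = 1 → seq N p = 1 := fun p hp => hmono' m N hmN p hp
    have := vic_mono u hVIC _ (seq m) (seq N) rfl hle q
    exact le_trans this.1 (le_trans (le_of_lt hpref) this.2)
end

section
/- In the VIC monotone two-action setting, every Nash equilibrium is a strong equilibrium. Precisely: suppose P is finite, Q = {1,2}, and the utilities satisfy the VIC monotonicity conditions (Proposition on utilities): if S₂ differs from S₁ only in player p's choice, with S₁(p) ≠ S₂(p), then u(S₁, q, S₁(p)) ≥ u(S₂, q, S₁(p)), u(S₁, q, S₂(p)) ≤ u(S₂, q, S₂(p)), and u(S₁, q, j) = u(S₂, q, j) for all j ∉ {S₁(p), S₂(p)}, for every player q. If a state S satisfies the Nash condition u(S, p, S(p)) ≥ u(S', p, S'(p)) for every player p and every state S' differing from S only in p's choice, then S satisfies the strong-equilibrium condition u(S, p, S(p)) ≥ u(S, p, a) for all p and all a ∈ Q. -/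
/-- In the VIC monotone setting, every Nash equilibrium is a strong
equilibrium: given the VIC monotonicity conditions on the utilities (for any
two states differing in exactly one player's choice), any state satisfying the
Nash condition also satisfies the strong-equilibrium condition. -/
theorem stmt_11 (P Q : Type*) [Fintype P] [DecidableEq P] [Fintype Q]
    (u : (P → Q) → P → Q → unitInterval)
    (hVIC : ∀ (S₁ S₂ : P → Q) (p : P),
      (∀ q, q ≠ p → S₁ q = S₂ q) → S₁ p ≠ S₂ p →
      ∀ q : P,
        u S₂ q (S₁ p) ≤ u S₁ q (S₁ p) ∧
        u S₁ q (S₂ p) ≤ u S₂ q (S₂ p) ∧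
        (∀ j : Q, j ≠ S₁ p → j ≠ S₂ p → u S₁ q j = u S₂ q j))
    (S : P → Q)
    (hNash : ∀ (p : P) (S' : P → Q), (∀ q, q ≠ p → S' q = S q) →
      u S' p (S' p) ≤ u S p (S p)) :
    ∀ (p : P) (a : Q), u S p a ≤ u S p (S p) := by
  intro p a
  by_cases h : a = S p
  · simp [h]
  · set S' := Function.update S p a with hS'
    have hdiff : ∀ q, q ≠ p → S q = S' q := by
      intro q hq; simp [hS', Function.update_of_ne hq]
    have hne : S p ≠ S' p := by
      simp [hS', Ne.symm h]
    have hmono := (hVIC S S' p hdiff hne p).2.1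
    have hnash := hNash p S' (fun q hq => (hdiff q hq).symm)
    have : S' p = a := by simp [hS']
    rw [this] at hmono hnash
    exact hmono.trans hnash
end
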